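/- Let n ≥ 3, 0 < α < 2, B > 0 and define H(s,t) = s^{-(n-α)/2}(1 - B·I(s,t)) with I(s,t) as above. After the change of variables b = sλ, one has ∂H/∂t (s,t) = (n-2)B / (2(t+s)^{n/2}) · ∫₀^{1/t} (1 - tλ)^{(n-4)/2} λ^{-α/2} dλ, and consequently the mixed partial ∂²H/∂t∂s (s,t) < 0 for all s, t > 0. -/

import Mathlib

/-!
Write `p = (n - 2) / 2` and `a = α / 2`. The substitution `b = (s / t) u` turns `H` into
`s ^ (-(p + 1 - a)) - B (s + t) ^ (-p) t ^ a P(t)`, where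
`P(t) = ∫₀¹ (1 - u)^p u^(-a) / (t + s u) du` is an integral over a fixed interval that can be
differentiated in `t` under the integral sign. An integration by parts in `u` and the splitting
`t + s u = t (1 - u) + (s + t) u` collapse the resulting combination of `P` and `P'`, so that
`∂H/∂t = p B (s + t) ^ (-p - 1) ∫₀^{1/t} (1 - tλ)^(p-1) λ^(-a) dλ`. The last integral is
`t ^ (a - 1)` times the Beta integral `∫₀¹ (1 - u)^(p-1) u^(-a) du > 0` and does not involve `s`,
so `∂H/∂t` is a positive multiple of `(t + s) ^ (-n/2)`, strictly decreasing in `s`.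
-/

open Set intervalIntegral MeasureTheory

theorem intervalIntegral.integral_congr_Ioo {f g : ℝ → ℝ} {a b : ℝ} (hab : a ≤ b)
    (h : EqOn f g (Ioo a b)) : ∫ x in a..b, f x = ∫ x in a..b, g x := by
  simp only [integral_of_le hab, integral_Ioc_eq_integral_Ioo]
  exact setIntegral_congr_fun measurableSet_Ioo h

theorem HasDerivAt.inv_pow {f : ℝ → ℝ} {f' x : ℝ} (hf : HasDerivAt f f' x) (hx : f x ≠ 0)
    (k : ℕ) : HasDerivAt (fun y => (f y ^ k)⁻¹) (-k * f' / f x ^ (k + 1)) x := by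
  refine ((hf.fun_pow k).fun_inv (pow_ne_zero k hx)).congr_deriv ?_
  rcases k with _ | k
  · simp
  · simp only [Nat.add_sub_cancel]
    field_simp
    ring

theorem intervalIntegrable_one_sub_rpow_mul_rpow_mul {p q : ℝ} (hp : -1 < p) (hq : -1 < q)
    {c : ℝ → ℝ} (hc : ContinuousOn c (Icc 0 1)) :
    IntervalIntegrable (fun u => (1 - u) ^ p * u ^ q * c u) volume 0 1 := by
  have hleft : IntervalIntegrable (fun u => (1 - u) ^ p * u ^ q * c u) volume 0 (1 / 2) := by
    have hcont : ContinuousOn (fun u : ℝ => (1 - u) ^ p * c u) (uIcc 0 (1 / 2)) := by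
      rw [uIcc_of_le (by norm_num)]
      refine ContinuousOn.mul ?_ (hc.mono (Icc_subset_Icc le_rfl (by norm_num)))
      exact (continuousOn_const.sub continuousOn_id).rpow_const fun u hu =>
        Or.inl (show (1 : ℝ) - u ≠ 0 by linarith [hu.2])
    convert (intervalIntegrable_rpow' hq).mul_continuousOn hcont using 1
    funext u
    ring
  have hright : IntervalIntegrable (fun u => (1 - u) ^ p * u ^ q * c u) volume (1 / 2) 1 := by
    have hsing := (intervalIntegrable_rpow' (a := 0) (b := 1 / 2) hp).comp_sub_left 1
    norm_num at hsing
    have hcont : ContinuousOn (fun u : ℝ => u ^ q * c u) (uIcc (1 / 2) 1) := by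
      rw [uIcc_of_le (by norm_num)]
      refine ContinuousOn.mul ?_ (hc.mono (Icc_subset_Icc (by norm_num) le_rfl))
      exact continuousOn_id.rpow_const fun u hu => Or.inl (show u ≠ 0 by linarith [hu.1])
    convert hsing.symm.mul_continuousOn hcont using 1
    funext u
    ring
  exact hleft.trans hright

/-- For `k = 1`, `t ^ (-q) * weightedBeta p q s t 1` is the paper's
`∫₀^{1/t} (1 - tλ)^p λ^q / (1 + sλ) dλ`, rescaled by `λ = u / t` to a fixed interval. -/
noncomputable def weightedBeta (p q s t : ℝ) (k : ℕ) : ℝ :=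
  ∫ u in (0 : ℝ)..1, (1 - u) ^ p * u ^ q / (t + s * u) ^ k

section weightedBeta

variable {p q s t : ℝ}

theorem weightedBeta_zero :
    weightedBeta p q s t 0 = ∫ u in (0 : ℝ)..1, (1 - u) ^ p * u ^ q := by
  simp [weightedBeta]

theorem intervalIntegrable_weightedBeta (hp : -1 < p) (hq : -1 < q) (hs : 0 ≤ s) (ht : 0 < t)
    (k : ℕ) : IntervalIntegrable (fun u => (1 - u) ^ p * u ^ q / (t + s * u) ^ k) volume 0 1 := by
  have hc : ContinuousOn (fun u : ℝ => ((t + s * u) ^ k)⁻¹) (Icc 0 1) :=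
    (by fun_prop : Continuous fun u : ℝ => (t + s * u) ^ k).continuousOn.inv₀ fun u hu =>
      (pow_pos (by nlinarith [hu.1]) k).ne'
  simpa only [div_eq_mul_inv] using intervalIntegrable_one_sub_rpow_mul_rpow_mul hp hq hc

theorem weightedBeta_pos (hp : -1 < p) (hq : -1 < q) (hs : 0 ≤ s) (ht : 0 < t) (k : ℕ) :
    0 < weightedBeta p q s t k := by
  refine intervalIntegral_pos_of_pos_on (intervalIntegrable_weightedBeta hp hq hs ht k)
    (fun u hu => ?_) one_pos
  have : 0 < 1 - u := sub_pos.2 hu.2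
  have : 0 < t + s * u := by nlinarith [hu.1]
  have := hu.1
  positivity

theorem weightedBeta_eq_mul_add_mul (hp : -1 < p) (hq : -1 < q) (hs : 0 ≤ s) (ht : 0 < t)
    (k : ℕ) :
    weightedBeta p q s t k =
      t * weightedBeta (p + 1) q s t (k + 1) + (s + t) * weightedBeta p (q + 1) s t (k + 1) := by
  simp only [weightedBeta]
  rw [← intervalIntegral.integral_const_mul, ← intervalIntegral.integral_const_mul,
    ← intervalIntegral.integral_add
      ((intervalIntegrable_weightedBeta (by linarith) hq hs ht _).const_mul _)
      ((intervalIntegrable_weightedBeta hp (by linarith) hs ht _).const_mul _)]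
  refine integral_congr_Ioo zero_le_one fun u hu => ?_
  simp only [Real.rpow_add_one (sub_pos.2 hu.2).ne', Real.rpow_add_one hu.1.ne', pow_succ]
  have hden : t + s * u ≠ 0 := (by nlinarith [hu.1] : 0 < t + s * u).ne'
  set y := t + s * u with hy
  field_simp
  rw [hy]
  ring

theorem mul_weightedBeta_succ_eq_sub (hp : -1 < p) (hq : -1 < q) (hs : 0 ≤ s) (ht : 0 < t)
    (k : ℕ) :
    s * weightedBeta p (q + 1) s t (k + 1) =
      weightedBeta p q s t k - t * weightedBeta p q s t (k + 1) := by
  simp only [weightedBeta]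
  rw [← intervalIntegral.integral_const_mul, ← intervalIntegral.integral_const_mul,
    ← intervalIntegral.integral_sub (intervalIntegrable_weightedBeta hp hq hs ht _)
      ((intervalIntegrable_weightedBeta hp hq hs ht _).const_mul _)]
  refine integral_congr_Ioo zero_le_one fun u hu => ?_
  simp only [Real.rpow_add_one hu.1.ne', pow_succ]
  have hden : t + s * u ≠ 0 := (by nlinarith [hu.1] : 0 < t + s * u).ne'
  set y := t + s * u with hy
  field_simp
  rw [hy]
  ring

theorem weightedBeta_integration_by_parts (hp : -1 < p) (hq : -1 < q) (hs : 0 ≤ s) (ht : 0 < t)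
    (k : ℕ) :
    (p + 1) * weightedBeta p (q + 1) s t k = (q + 1) * weightedBeta (p + 1) q s t k
      - k * s * weightedBeta (p + 1) (q + 1) s t (k + 1) := by
  have hp1 : 0 < p + 1 := by linarith
  have hq1 : 0 < q + 1 := by linarith
  have hden : ∀ u : ℝ, 0 ≤ u → t + s * u ≠ 0 := fun u hu => by positivity
  set f : ℝ → ℝ := fun u => (1 - u) ^ (p + 1) * u ^ (q + 1) * ((t + s * u) ^ k)⁻¹
  have hf : ContinuousOn f (Icc 0 1) := by
    refine ContinuousOn.mul (ContinuousOn.mul ?_ ?_) ?_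
    · exact (continuousOn_const.sub continuousOn_id).rpow_const fun _ _ => Or.inr hp1.le
    · exact continuousOn_id.rpow_const fun _ _ => Or.inr hq1.le
    · exact (by fun_prop : Continuous fun u : ℝ => (t + s * u) ^ k).continuousOn.inv₀
        fun u hu => pow_ne_zero k (hden u hu.1)
  have hf' : ∀ u ∈ Ioo (0 : ℝ) 1, HasDerivAt f
      (-(p + 1) * ((1 - u) ^ p * u ^ (q + 1) / (t + s * u) ^ k)
        + (q + 1) * ((1 - u) ^ (p + 1) * u ^ q / (t + s * u) ^ k)
        - k * s * ((1 - u) ^ (p + 1) * u ^ (q + 1) / (t + s * u) ^ (k + 1))) u := by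
    intro u hu
    have h1 := ((hasDerivAt_id u).const_sub 1).rpow_const (p := p + 1)
      (Or.inl (sub_pos.2 hu.2).ne')
    have h2 := (hasDerivAt_id u).rpow_const (p := q + 1) (Or.inl hu.1.ne')
    have h3 := (((hasDerivAt_id u).const_mul s).const_add t).inv_pow (hden u hu.1.le) k
    refine ((h1.fun_mul h2).fun_mul h3).congr_deriv ?_
    simp only [id, add_sub_cancel_right]
    ring
  have hi₁ := (intervalIntegrable_weightedBeta hp (by linarith : -1 < q + 1) hs ht k).const_mul
    (-(p + 1))
  have hi₂ := (intervalIntegrable_weightedBeta (by linarith : -1 < p + 1) hq hs ht k).const_mul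
    (q + 1)
  have hi₃ := (intervalIntegrable_weightedBeta (by linarith : -1 < p + 1)
    (by linarith : -1 < q + 1) hs ht (k + 1)).const_mul (k * s)
  have hFTC := integral_eq_sub_of_hasDeriv_right_of_le zero_le_one hf
    (fun u hu => (hf' u hu).hasDerivWithinAt) ((hi₁.add hi₂).sub hi₃)
  rw [intervalIntegral.integral_sub (hi₁.add hi₂) hi₃, intervalIntegral.integral_add hi₁ hi₂,
    intervalIntegral.integral_const_mul, intervalIntegral.integral_const_mul,
    intervalIntegral.integral_const_mul] at hFTC
  simp only [f, weightedBeta] at hFTC ⊢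
  norm_num [Real.zero_rpow hp1.ne', Real.zero_rpow hq1.ne'] at hFTC
  linear_combination -hFTC

theorem hasDerivAt_weightedBeta (hp : -1 < p) (hq : -1 < q) (hs : 0 ≤ s) (ht : 0 < t) (k : ℕ) :
    HasDerivAt (fun τ => weightedBeta p q s τ k) (-k * weightedBeta p q s t (k + 1)) t := by
  have hden : ∀ {τ u : ℝ}, t / 2 < τ → 0 ≤ u → t / 2 ≤ τ + s * u := fun hτ hu => by
    nlinarith [mul_nonneg hs hu]
  have hint : ∀ {τ : ℝ} (k' : ℕ), 0 < τ → IntervalIntegrable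
      (fun u => (1 - u) ^ p * u ^ q / (τ + s * u) ^ k') volume 0 1 :=
    fun k' hτ => intervalIntegrable_weightedBeta hp hq hs hτ k'
  have hbound : IntervalIntegrable (fun u => (1 - u) ^ p * u ^ q * (k / (t / 2) ^ (k + 1)))
      volume 0 1 := intervalIntegrable_one_sub_rpow_mul_rpow_mul hp hq continuousOn_const
  have hdom := hasDerivAt_integral_of_dominated_loc_of_deriv_le (𝕜 := ℝ) (μ := volume)
    (F := fun τ u => (1 - u) ^ p * u ^ q / (τ + s * u) ^ k)
    (F' := fun τ u => -k * ((1 - u) ^ p * u ^ q / (τ + s * u) ^ (k + 1)))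
    (Ioi_mem_nhds (half_lt_self ht))
    (Filter.eventually_of_mem (Ioi_mem_nhds (half_lt_self ht)) fun τ hτ =>
      (hint k ((half_pos ht).trans hτ)).def'.aestronglyMeasurable)
    (hint k ht) ((hint (k + 1) ht).const_mul _).def'.aestronglyMeasurable ?_ hbound ?_
  · simpa only [weightedBeta, intervalIntegral.integral_const_mul] using hdom.2
  · refine Filter.Eventually.of_forall fun u hu τ hτ => ?_
    rw [uIoc_of_le zero_le_one] at hu
    have hA : 0 ≤ (1 - u) ^ p * u ^ q :=
      mul_nonneg (Real.rpow_nonneg (sub_nonneg.2 hu.2) _) (Real.rpow_nonneg hu.1.le _)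
    have hτu := hden hτ hu.1.le
    rw [norm_mul, norm_neg, Real.norm_natCast,
      Real.norm_of_nonneg (div_nonneg hA (pow_nonneg ((half_pos ht).le.trans hτu) _)),
      ← Real.norm_of_nonneg hA]
    calc (k : ℝ) * (‖(1 - u) ^ p * u ^ q‖ / (τ + s * u) ^ (k + 1))
        ≤ k * (‖(1 - u) ^ p * u ^ q‖ / (t / 2) ^ (k + 1)) := by gcongr
      _ = _ := by ring
  · refine Filter.Eventually.of_forall fun u hu τ hτ => ?_
    rw [uIoc_of_le zero_le_one] at hu
    have hτu : 0 < τ + s * u := (half_pos ht).trans_le (hden hτ hu.1.le)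
    have h := (((hasDerivAt_id' τ).add_const (s * u)).inv_pow hτu.ne' k).const_mul
      ((1 - u) ^ p * u ^ q)
    simp only [div_eq_mul_inv]
    exact h.congr_deriv (by ring)

theorem integral_sub_mul_rpow_div_eq_weightedBeta {a : ℝ} (hs : 0 < s) (ht : 0 < t) :
    ∫ b in (0 : ℝ)..s / t, (s - t * b) ^ p / (b ^ a * (1 + b)) =
      s ^ (p + 1 - a) * t ^ a * weightedBeta p (-a) s t 1 := by
  have h := smul_integral_comp_mul_left (a := 0) (b := 1)
    (fun b => (s - t * b) ^ p / (b ^ a * (1 + b))) (s / t)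
  rw [mul_zero, mul_one] at h
  rw [← h, smul_eq_mul, weightedBeta, ← intervalIntegral.integral_const_mul,
    ← intervalIntegral.integral_const_mul]
  refine integral_congr_Ioo zero_le_one fun u hu => ?_
  have hsub : s - t * (s / t * u) = s * (1 - u) := by field_simp
  simp only [hsub, Real.mul_rpow hs.le (sub_pos.2 hu.2).le,
    Real.mul_rpow (div_pos hs ht).le hu.1.le, Real.div_rpow hs.le ht.le, Real.rpow_neg hu.1.le,
    Real.rpow_sub hs, Real.rpow_add hs, Real.rpow_one, pow_one]
  have : 0 < t + s * u := by nlinarith [hu.1]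
  have := Real.rpow_pos_of_pos hs a
  have := Real.rpow_pos_of_pos ht a
  have := Real.rpow_pos_of_pos hu.1 a
  field_simp

theorem hasDerivAt_rpow_mul_weightedBeta {a : ℝ} (hp : 0 < p) (ha : a < 1) (hs : 0 ≤ s)
    (ht : 0 < t) :
    HasDerivAt (fun τ => (s + τ) ^ (-p) * (τ ^ a * weightedBeta p (-a) s τ 1))
      (-p * (s + t) ^ (-p - 1) * (t ^ (a - 1) * weightedBeta (p - 1) (-a) s t 0)) t := by
  have hp1 : -1 < p - 1 := by linarith
  have hq : -1 < -a := by linarith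
  have hst : 0 < s + t := by linarith
  have hsplit := weightedBeta_eq_mul_add_mul hp1 hq hs ht 0
  have hparts := weightedBeta_integration_by_parts hp1 hq hs ht 1
  have hsucc := mul_weightedBeta_succ_eq_sub (by linarith : -1 < p) hq hs ht 1
  simp only [sub_add_cancel, zero_add, Nat.cast_one] at hsplit hparts
  have key : p * weightedBeta (p - 1) (-a) s t 0 = p * t * weightedBeta p (-a) s t 1
      - a * (s + t) * weightedBeta p (-a) s t 1 + (s + t) * t * weightedBeta p (-a) s t 2 := by
    linear_combination p * hsplit + (s + t) * hparts - (s + t) * hsucc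
  have h1 := ((hasDerivAt_id' t).const_add s).rpow_const (p := -p) (Or.inl hst.ne')
  have h2 := (hasDerivAt_id' t).rpow_const (p := a) (Or.inl ht.ne')
  have h3 := hasDerivAt_weightedBeta (by linarith : -1 < p) hq hs ht 1
  refine (h1.fun_mul (h2.fun_mul h3)).congr_deriv ?_
  rw [show (s + t) ^ (-p) = (s + t) ^ (-p - 1) * (s + t) by
      rw [← Real.rpow_add_one hst.ne']; ring_nf,
    show t ^ a = t ^ (a - 1) * t by rw [← Real.rpow_add_one ht.ne']; ring_nf]
  push_cast
  linear_combination (s + t) ^ (-p - 1) * t ^ (a - 1) * key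

end weightedBeta

theorem integral_one_sub_mul_rpow_mul_rpow {t : ℝ} (ht : 0 < t) (r q : ℝ) :
    ∫ l in (0 : ℝ)..1 / t, (1 - t * l) ^ r * l ^ q =
      t ^ (-q - 1) * ∫ u in (0 : ℝ)..1, (1 - u) ^ r * u ^ q := by
  have h := intervalIntegral.integral_comp_div (a := 0) (b := 1)
    (fun l => (1 - t * l) ^ r * l ^ q) ht.ne'
  rw [zero_div, smul_eq_mul] at h
  calc ∫ l in (0 : ℝ)..1 / t, (1 - t * l) ^ r * l ^ q
      = t⁻¹ * ∫ u in (0 : ℝ)..1, (1 - t * (u / t)) ^ r * (u / t) ^ q := by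
        rw [h, inv_mul_cancel_left₀ ht.ne']
    _ = _ := by
        rw [← intervalIntegral.integral_const_mul, ← intervalIntegral.integral_const_mul]
        refine integral_congr_Ioo zero_le_one fun u hu => ?_
        simp only [mul_div_cancel₀ u ht.ne', Real.div_rpow hu.1.le ht.le, Real.rpow_sub ht,
          Real.rpow_neg ht.le, Real.rpow_one]
        field_simp

theorem exists_hasDerivAt_mul_inv_rpow_neg {c e t s : ℝ} (hc : 0 < c) (he : 0 < e)
    (hts : 0 < t + s) : ∃ d, HasDerivAt (fun x => c * ((t + x) ^ e)⁻¹) d s ∧ d < 0 := by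
  have hderiv := ((((hasDerivAt_id' s).const_add t).rpow_const (p := e)
    (Or.inl hts.ne')).inv (Real.rpow_pos_of_pos hts _).ne').const_mul c
  refine ⟨_, hderiv, mul_neg_of_pos_of_neg hc (div_neg_of_neg_of_pos ?_ (by positivity))⟩
  have := Real.rpow_pos_of_pos hts (e - 1)
  nlinarith

/-- After the change of variables b = sλ, the t-derivative of
H(s,t) = s^{-(n-α)/2}(1 - B·I(s,t)) is
(n-2)B/(2(t+s)^{n/2}) ∫₀^{1/t} (1-tλ)^{(n-4)/2} λ^{-α/2} dλ,
and the mixed partial ∂²H/∂t∂s is negative. -/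
theorem stmt5 (n : ℕ) (hn : 3 ≤ n) (α B : ℝ) (hα : α ∈ Set.Ioo (0 : ℝ) 2) (hB : 0 < B)
    (I H : ℝ → ℝ → ℝ)
    (hI : ∀ s t : ℝ, 0 < s → 0 < t →
      I s t = (s + t) ^ (-(((n : ℝ) - 2) / 2)) *
        ∫ b in (0 : ℝ)..(s / t), (s - t * b) ^ (((n : ℝ) - 2) / 2) / (b ^ (α / 2) * (1 + b)))
    (hH : ∀ s t : ℝ, 0 < s → 0 < t →
      H s t = s ^ (-(((n : ℝ) - α) / 2)) * (1 - B * I s t))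
    (Ht : ℝ → ℝ → ℝ)
    (hHt : ∀ s t : ℝ, Ht s t = ((n : ℝ) - 2) * B / (2 * (t + s) ^ ((n : ℝ) / 2)) *
        ∫ l in (0 : ℝ)..(1 / t), (1 - t * l) ^ (((n : ℝ) - 4) / 2) * l ^ (-(α / 2)))
    (s t : ℝ) (hs : 0 < s) (ht : 0 < t) :
    HasDerivAt (fun t' => H s t') (Ht s t) t ∧
    ∃ d : ℝ, HasDerivAt (fun s' => Ht s' t) d s ∧ d < 0 := by
  set p : ℝ := ((n : ℝ) - 2) / 2 with hp_def
  set a : ℝ := α / 2 with ha_def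
  have hp : 0 < p := by
    have : (3 : ℝ) ≤ n := by exact_mod_cast hn
    linarith
  have ha : a < 1 := by linarith [hα.2]
  have hHs : ∀ τ, 0 < τ → H s τ =
      s ^ (-(((n : ℝ) - α) / 2)) - B * ((s + τ) ^ (-p) * (τ ^ a * weightedBeta p (-a) s τ 1)) := by
    intro τ hτ
    rw [hH s τ hs hτ, hI s τ hs hτ, integral_sub_mul_rpow_div_eq_weightedBeta hs hτ,
      show -(((n : ℝ) - α) / 2) = -(p + 1 - a) by ring, Real.rpow_neg hs.le]
    field_simp
  have hL : ∫ l in (0 : ℝ)..(1 / t), (1 - t * l) ^ (((n : ℝ) - 4) / 2) * l ^ (-a) =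
      t ^ (a - 1) * weightedBeta (p - 1) (-a) s t 0 := by
    rw [show ((n : ℝ) - 4) / 2 = p - 1 by ring, integral_one_sub_mul_rpow_mul_rpow ht,
      weightedBeta_zero, neg_neg]
  set L := t ^ (a - 1) * weightedBeta (p - 1) (-a) s t 0
  have hLpos : 0 < L := mul_pos (Real.rpow_pos_of_pos ht _)
    (weightedBeta_pos (by linarith) (by linarith) hs.le ht 0)
  have hHt' : ∀ s', Ht s' t = p * B * L * ((t + s') ^ (p + 1))⁻¹ := fun s' => by
    rw [hHt, hL, show (n : ℝ) - 2 = 2 * p by ring, show (n : ℝ) / 2 = p + 1 by ring]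
    field_simp
  refine ⟨?_, by simpa only [hHt'] using
    exists_hasDerivAt_mul_inv_rpow_neg (by positivity) (by linarith) (by linarith : 0 < t + s)⟩
  have hderiv := ((hasDerivAt_rpow_mul_weightedBeta hp ha hs.le ht).const_mul B).const_sub
    (s ^ (-(((n : ℝ) - α) / 2)))
  refine (hderiv.congr_of_eventuallyEq
    (Filter.eventually_of_mem (Ioi_mem_nhds ht) hHs)).congr_deriv ?_
  rw [hHt', add_comm t s, show -p - 1 = -(p + 1) by ring, Real.rpow_neg (by linarith)]
  ring
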